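/- arXiv:1608.01908 — 2 statements merged into one kernel-verified Lean document; each statement's English description precedes it below -/
import Mathlib

section
/- (Gühne's criterion.) Let ϱ be a separable three qubit state whose X-part is X(a,b,c). Then for every z ∈ ℂ⁴, L(ϱ,z) ≤ C(z)·Δ_ϱ, where Δ_ϱ := min{√(a₁b₁), √(a₂b₂), √(a₃b₃), √(a₄b₄), (a₁b₂b₃a₄)^{1/4}, (b₁a₂a₃b₄)^{1/4}}. -/
open scoped ComplexOrder Matrix

noncomputable section

/-- Kronecker product of three vectors in `ℂ²`, indices in lexicographic order. -/
def kron3 (x y z : Fin 2 → ℂ) : Fin 8 → ℂ := fun i =>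
  x ⟨i.val / 4, by have := i.isLt; omega⟩ *
  y ⟨i.val / 2 % 2, by omega⟩ *
  z ⟨i.val % 2, by omega⟩

/-- Kronecker product of three `2×2` matrices, indices in lexicographic order. -/
def kron3M (A B C : Matrix (Fin 2) (Fin 2) ℂ) : Matrix (Fin 8) (Fin 8) ℂ :=
  Matrix.of fun i j =>
    A ⟨i.val / 4, by have := i.isLt; omega⟩ ⟨j.val / 4, by have := j.isLt; omega⟩ *
    B ⟨i.val / 2 % 2, by omega⟩ ⟨j.val / 2 % 2, by omega⟩ *
    C ⟨i.val % 2, by omega⟩ ⟨j.val % 2, by omega⟩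

/-- The rank one matrix `|v⟩⟨v|`. -/
def proj (v : Fin 8 → ℂ) : Matrix (Fin 8) (Fin 8) ℂ :=
  Matrix.of fun i j => v i * star (v j)

/-- The X-part of an `8×8` matrix: keep the diagonal and the anti-diagonal, zero elsewhere. -/
def Xpart (ρ : Matrix (Fin 8) (Fin 8) ℂ) : Matrix (Fin 8) (Fin 8) ℂ :=
  Matrix.of fun i j => if i = j ∨ i.val + j.val = 7 then ρ i j else 0

/-- A three qubit state: positive semidefinite `8×8` matrix of trace 1. -/
def IsState (ρ : Matrix (Fin 8) (Fin 8) ℂ) : Prop :=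
  ρ.PosSemidef ∧ ρ.trace = 1

/-- Unit vector in `ℂ²`. -/
def unitVec (v : Fin 2 → ℂ) : Prop := ∑ j, star (v j) * v j = 1

/-- (Full) separability of a three qubit state: finite convex combination of
pure product states. -/
def IsSep (ρ : Matrix (Fin 8) (Fin 8) ℂ) : Prop :=
  ∃ (n : ℕ) (p : Fin n → ℝ) (x y z : Fin n → Fin 2 → ℂ),
    (∀ k, 0 ≤ p k) ∧ (∑ k, p k = 1) ∧
    (∀ k, unitVec (x k)) ∧ (∀ k, unitVec (y k)) ∧ (∀ k, unitVec (z k)) ∧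
    ρ = ∑ k, (p k : ℂ) • proj (kron3 (x k) (y k) (z k))

/-- The pairing `⟨ϱ, W⟩ = Tr (ϱ Wᵀ)`. -/
def pairing (ρ W : Matrix (Fin 8) (Fin 8) ℂ) : ℂ := (ρ * Wᵀ).trace

/-- Entanglement witness: self-adjoint, not positive semidefinite, and
nonnegative pairing against all separable states. -/
def IsEW (W : Matrix (Fin 8) (Fin 8) ℂ) : Prop :=
  W.IsHermitian ∧ ¬ W.PosSemidef ∧ ∀ ρ, IsSep ρ → 0 ≤ pairing ρ W

/-- The X-shaped matrix `X(a,b,c)`. -/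
def XMat (a b : Fin 4 → ℝ) (c : Fin 4 → ℂ) : Matrix (Fin 8) (Fin 8) ℂ :=
  Matrix.of fun i j =>
    if i = j then
      (if h : i.val < 4 then ((a ⟨i.val, h⟩ : ℝ) : ℂ)
       else ((b ⟨7 - i.val, by have := i.isLt; omega⟩ : ℝ) : ℂ))
    else if h7 : i.val + j.val = 7 then
      (if h : i.val < 4 then c ⟨i.val, h⟩
       else star (c ⟨j.val, by have := i.isLt; omega⟩))
    else 0

/-- The quantity `A(s,t)`. -/
def Afun (s t : Fin 4 → ℝ) : ℝ :=
  ⨅ r : Set.Ioi (0 : ℝ),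
    (Real.sqrt ((s 0 * (r : ℝ)⁻¹ + t 3 * (r : ℝ)) * (s 3 * (r : ℝ)⁻¹ + t 0 * (r : ℝ))) +
     Real.sqrt ((s 1 * (r : ℝ)⁻¹ + t 2 * (r : ℝ)) * (s 2 * (r : ℝ)⁻¹ + t 1 * (r : ℝ))))

/-- The quantity `B(u)`. -/
def Bfun (u : Fin 4 → ℂ) : ℝ :=
  ⨆ θ : ℝ,
    (‖u 0 * Complex.exp ((θ : ℂ) * Complex.I) + star (u 3)‖ +
     ‖u 1 * Complex.exp ((θ : ℂ) * Complex.I) + star (u 2)‖)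

/-- The quantity `C(z)`. -/
def Cfun (z : Fin 4 → ℂ) : ℝ :=
  ⨆ p : ℝ × ℝ × ℝ,
    |(z 0 * Complex.exp (((p.1 + p.2.1 + p.2.2 : ℝ) : ℂ) * Complex.I)).re +
     (z 1 * Complex.exp (((p.1 : ℝ) : ℂ) * Complex.I)).re +
     (z 2 * Complex.exp (((p.2.1 : ℝ) : ℂ) * Complex.I)).re +
     (z 3 * Complex.exp (((p.2.2 : ℝ) : ℂ) * Complex.I)).re|

/-- The quantity `L(ϱ,z)`, where the X-part of `ϱ` is `X(a,b,c)`. -/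
def Lfun (c z : Fin 4 → ℂ) : ℝ :=
  (z 0 * c 0 + z 1 * c 1 + z 2 * c 2 + z 3 * star (c 3)).re

/-- Partial transpose with respect to the first tensor factor. -/
def pt1 (ρ : Matrix (Fin 8) (Fin 8) ℂ) : Matrix (Fin 8) (Fin 8) ℂ :=
  Matrix.of fun i j =>
    ρ ⟨(j.val / 4) * 4 + i.val % 4, by have := i.isLt; have := j.isLt; omega⟩
      ⟨(i.val / 4) * 4 + j.val % 4, by have := i.isLt; have := j.isLt; omega⟩

/-- Partial transpose with respect to the second tensor factor. -/
def pt2 (ρ : Matrix (Fin 8) (Fin 8) ℂ) : Matrix (Fin 8) (Fin 8) ℂ :=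
  Matrix.of fun i j =>
    ρ ⟨(i.val / 4) * 4 + (j.val / 2 % 2) * 2 + i.val % 2,
        by have := i.isLt; have := j.isLt; omega⟩
      ⟨(j.val / 4) * 4 + (i.val / 2 % 2) * 2 + j.val % 2,
        by have := i.isLt; have := j.isLt; omega⟩

/-- Partial transpose with respect to the third tensor factor. -/
def pt3 (ρ : Matrix (Fin 8) (Fin 8) ℂ) : Matrix (Fin 8) (Fin 8) ℂ :=
  Matrix.of fun i j =>
    ρ ⟨(i.val / 4) * 4 + (i.val / 2 % 2) * 2 + j.val % 2,
        by have := i.isLt; have := j.isLt; omega⟩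
      ⟨(j.val / 4) * 4 + (j.val / 2 % 2) * 2 + i.val % 2,
        by have := i.isLt; have := j.isLt; omega⟩

/-- A three qubit state has positive partial transposes. -/
def IsPPT (ρ : Matrix (Fin 8) (Fin 8) ℂ) : Prop :=
  (pt1 ρ).PosSemidef ∧ (pt2 ρ).PosSemidef ∧ (pt3 ρ).PosSemidef

/-- `λ₅` from the anti-diagonal of a GHZ diagonal state. -/
def lam5 (c : Fin 4 → ℝ) : ℝ := 2 * (c 0 + c 1 + c 2 + c 3)
/-- `λ₆`. -/
def lam6 (c : Fin 4 → ℝ) : ℝ := 2 * (-c 0 - c 1 + c 2 + c 3)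
/-- `λ₇`. -/
def lam7 (c : Fin 4 → ℝ) : ℝ := 2 * (-c 0 + c 1 - c 2 + c 3)
/-- `λ₈`. -/
def lam8 (c : Fin 4 → ℝ) : ℝ := 2 * (-c 0 + c 1 + c 2 - c 3)

/-- `t₁`. -/
def tc1 (c : Fin 4 → ℝ) : ℝ :=
  c 0 * (-(c 0)^2 + (c 1)^2 + (c 2)^2 + (c 3)^2) - 2 * c 1 * c 2 * c 3
/-- `t₂`. -/
def tc2 (c : Fin 4 → ℝ) : ℝ :=
  c 1 * ((c 0)^2 - (c 1)^2 + (c 2)^2 + (c 3)^2) - 2 * c 0 * c 2 * c 3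
/-- `t₃`. -/
def tc3 (c : Fin 4 → ℝ) : ℝ :=
  c 2 * ((c 0)^2 + (c 1)^2 - (c 2)^2 + (c 3)^2) - 2 * c 0 * c 1 * c 3
/-- `t₄`. -/
def tc4 (c : Fin 4 → ℝ) : ℝ :=
  c 3 * ((c 0)^2 + (c 1)^2 + (c 2)^2 - (c 3)^2) - 2 * c 0 * c 1 * c 2


/-!
Absorbing the weights into the first factor, a separable `ϱ` is `∑ₖ |vₖ⟩⟨vₖ|` with unnormalised
product vectors `vₖ = xₖ ⊗ yₖ ⊗ uₖ` (entries indexed by `0, …, 7`). For one product vector put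
`X = x₀x̄₁`, `Y = y₀ȳ₁`, `Z = u₀ū₁`: its anti-diagonal entries are `XYZ, XYZ̄, XȲZ` and `v₃v̄₄ = conj (X̄YZ)`, so its
contribution to `L` is `Re (z₁XYZ + z₂XYZ̄ + z₃XȲZ + z₄X̄YZ)`. In polar form this is `|XYZ|` times
one of the expressions in the supremum defining `C(z)`, with `α, β, γ` the phases of
`XYZ̄, XȲZ, X̄YZ` (whose sum is the phase of `XYZ`). Hence `L(ϱ,z) ≤ C(z) ∑ₖ mₖ` with `mₖ = |XₖYₖZₖ|`.
Finally `mₖ² = |vₖ(i)|² |vₖ(7-i)|²` for every `i`, and `mₖ⁴` is the product of the `|vₖ(i)|²` over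
`i ∈ {0,3,5,6}`, and also over `i ∈ {1,2,4,7}`; since the diagonal of `ϱ` is `∑ₖ |vₖ(i)|²`,
Cauchy–Schwarz (twice, for the fourth roots) bounds `∑ₖ mₖ` by each of the six terms of `Δ_ϱ`.
-/
open ComplexConjugate Complex

lemma sum_sqrt_mul_le_sqrt_mul_sum {ι : Type*} (s : Finset ι) {f g : ι → ℝ}
    (hf : ∀ i, 0 ≤ f i) (hg : ∀ i, 0 ≤ g i) :
    ∑ i ∈ s, √(f i * g i) ≤ √((∑ i ∈ s, f i) * ∑ i ∈ s, g i) := by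
  rw [Real.sqrt_mul (Finset.sum_nonneg fun i _ => hf i)]
  simpa only [Real.sqrt_mul (hf _)] using Real.sum_sqrt_mul_sqrt_le s hf hg

lemma sum_sqrt_sqrt_mul_le_sqrt_sqrt_mul_sum {ι : Type*} (s : Finset ι) {f g h l : ι → ℝ}
    (hf : ∀ i, 0 ≤ f i) (hg : ∀ i, 0 ≤ g i) (hh : ∀ i, 0 ≤ h i) (hl : ∀ i, 0 ≤ l i) :
    ∑ i ∈ s, √√(f i * g i * h i * l i) ≤
      √√((∑ i ∈ s, f i) * (∑ i ∈ s, g i) * (∑ i ∈ s, h i) * ∑ i ∈ s, l i) := by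
  have sqrt_sqrt_mul : ∀ p q r t : ℝ, 0 ≤ p * q → √√(p * q * r * t) = √(√(p * q) * √(r * t)) := by
    intro p q r t hpq
    rw [mul_assoc (p * q), Real.sqrt_mul hpq]
  have hfg : ∀ i, 0 ≤ f i * g i := fun i => mul_nonneg (hf i) (hg i)
  calc ∑ i ∈ s, √√(f i * g i * h i * l i)
      = ∑ i ∈ s, √(√(f i * g i) * √(h i * l i)) :=
        Finset.sum_congr rfl fun i _ => sqrt_sqrt_mul _ _ _ _ (hfg i)
    _ ≤ √((∑ i ∈ s, √(f i * g i)) * ∑ i ∈ s, √(h i * l i)) :=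
        sum_sqrt_mul_le_sqrt_mul_sum s (fun _ => Real.sqrt_nonneg _) fun _ => Real.sqrt_nonneg _
    _ ≤ √(√((∑ i ∈ s, f i) * ∑ i ∈ s, g i) * √((∑ i ∈ s, h i) * ∑ i ∈ s, l i)) :=
        Real.sqrt_le_sqrt (mul_le_mul (sum_sqrt_mul_le_sqrt_mul_sum s hf hg)
          (sum_sqrt_mul_le_sqrt_mul_sum s hh hl)
          (Finset.sum_nonneg fun _ _ => Real.sqrt_nonneg _) (Real.sqrt_nonneg _))
    _ = _ := (sqrt_sqrt_mul _ _ _ _ (mul_nonneg (Finset.sum_nonneg fun i _ => hf i)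
        (Finset.sum_nonneg fun i _ => hg i))).symm

lemma abs_re_mul_exp_le_norm (w : ℂ) (θ : ℝ) : |(w * exp (θ * I)).re| ≤ ‖w‖ := by
  simpa only [norm_mul, norm_exp_ofReal_mul_I, mul_one] using abs_re_le_norm (w * exp (θ * I))

lemma Cfun_bddAbove (z : Fin 4 → ℂ) : BddAbove (Set.range fun p : ℝ × ℝ × ℝ =>
    |(z 0 * exp (((p.1 + p.2.1 + p.2.2 : ℝ) : ℂ) * I)).re + (z 1 * exp ((p.1 : ℂ) * I)).re +
      (z 2 * exp ((p.2.1 : ℂ) * I)).re + (z 3 * exp ((p.2.2 : ℂ) * I)).re|) := by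
  refine ⟨‖z 0‖ + ‖z 1‖ + ‖z 2‖ + ‖z 3‖, ?_⟩
  rintro _ ⟨⟨α, β, γ⟩, rfl⟩
  have h0 := abs_le.1 (abs_re_mul_exp_le_norm (z 0) (α + β + γ))
  have h1 := abs_le.1 (abs_re_mul_exp_le_norm (z 1) α)
  have h2 := abs_le.1 (abs_re_mul_exp_le_norm (z 2) β)
  have h3 := abs_le.1 (abs_re_mul_exp_le_norm (z 3) γ)
  exact abs_le.2 ⟨by linarith, by linarith⟩

lemma le_Cfun (z : Fin 4 → ℂ) (α β γ : ℝ) :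
    |(z 0 * exp (((α + β + γ : ℝ) : ℂ) * I)).re + (z 1 * exp ((α : ℂ) * I)).re +
      (z 2 * exp ((β : ℂ) * I)).re + (z 3 * exp ((γ : ℂ) * I)).re| ≤ Cfun z :=
  le_ciSup (Cfun_bddAbove z) (α, β, γ)

lemma Cfun_nonneg (z : Fin 4 → ℂ) : 0 ≤ Cfun z :=
  (abs_nonneg _).trans (le_Cfun z 0 0 0)

lemma conj_exp_ofReal_mul_I (θ : ℝ) : conj (exp (θ * I)) = (exp (θ * I))⁻¹ := by
  rw [← exp_conj, map_mul, conj_ofReal, conj_I, ← exp_neg]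
  ring_nf

lemma re_le_Cfun_mul_norm (z : Fin 4 → ℂ) (X Y Z : ℂ) :
    (z 0 * (X * Y * Z) + z 1 * (X * Y * conj Z) + z 2 * (X * conj Y * Z) +
      z 3 * (conj X * Y * Z)).re ≤ Cfun z * (‖X‖ * ‖Y‖ * ‖Z‖) := by
  set α := X.arg + Y.arg - Z.arg
  set β := X.arg - Y.arg + Z.arg
  set γ := -X.arg + Y.arg + Z.arg
  have polar : (z 0 * (X * Y * Z) + z 1 * (X * Y * conj Z) + z 2 * (X * conj Y * Z) +
      z 3 * (conj X * Y * Z)) = ((‖X‖ * ‖Y‖ * ‖Z‖ : ℝ) : ℂ) *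
        (z 0 * exp (((α + β + γ : ℝ) : ℂ) * I) + z 1 * exp ((α : ℂ) * I) +
          z 2 * exp ((β : ℂ) * I) + z 3 * exp ((γ : ℂ) * I)) := by
    rw [show α + β + γ = X.arg + Y.arg + Z.arg by ring]
    conv_lhs => rw [← norm_mul_exp_arg_mul_I X, ← norm_mul_exp_arg_mul_I Y,
      ← norm_mul_exp_arg_mul_I Z]
    simp only [α, β, γ, map_mul, conj_ofReal, conj_exp_ofReal_mul_I, ofReal_add, ofReal_sub,
      ofReal_neg, ofReal_mul, add_mul, sub_mul, neg_mul, exp_add, exp_sub, exp_neg]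
    ring
  rw [polar, re_ofReal_mul, mul_comm (Cfun z)]
  refine mul_le_mul_of_nonneg_left ((le_abs_self _).trans ?_) (by positivity)
  simpa only [add_re] using le_Cfun z α β γ

lemma kron3_eq_vec (x y u : Fin 2 → ℂ) : kron3 x y u =
    ![x 0 * y 0 * u 0, x 0 * y 0 * u 1, x 0 * y 1 * u 0, x 0 * y 1 * u 1,
      x 1 * y 0 * u 0, x 1 * y 0 * u 1, x 1 * y 1 * u 0, x 1 * y 1 * u 1] := by
  funext i
  fin_cases i <;> rfl

def kron3Coherence (x y u : Fin 2 → ℂ) : ℝ :=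
  ‖x 0 * conj (x 1)‖ * ‖y 0 * conj (y 1)‖ * ‖u 0 * conj (u 1)‖

section kron3Coherence

variable (x y u : Fin 2 → ℂ)

lemma kron3Coherence_nonneg : 0 ≤ kron3Coherence x y u := by
  unfold kron3Coherence
  positivity

lemma kron3Coherence_eq_sqrt {i j : Fin 8} (hij : i.val + j.val = 7) :
    kron3Coherence x y u = √(normSq (kron3 x y u i) * normSq (kron3 x y u j)) := by
  obtain rfl : j = i.rev := Fin.ext (by rw [Fin.val_rev]; omega)
  rw [← Real.sqrt_sq (kron3Coherence_nonneg x y u)]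
  congr 1
  fin_cases i <;>
    simp only [Fin.zero_eta, Fin.mk_one, Fin.reduceFinMk, Fin.isValue, Fin.reduceRev, Fin.rev_zero,
      Fin.reduceLast, kron3Coherence, kron3_eq_vec, Matrix.cons_val, mul_pow, Complex.sq_norm,
      normSq_mul, normSq_conj] <;>
    ring

lemma kron3Coherence_eq_sqrt_sqrt_even : kron3Coherence x y u =
    √√(normSq (kron3 x y u 0) * normSq (kron3 x y u 6) * normSq (kron3 x y u 5) *
      normSq (kron3 x y u 3)) := by
  rw [← Real.sqrt_sq (kron3Coherence_nonneg x y u), ← Real.sqrt_sq (sq_nonneg _)]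
  congr 2
  simp only [kron3Coherence, kron3_eq_vec, Matrix.cons_val, mul_pow, Complex.sq_norm, normSq_mul,
    normSq_conj]
  ring

lemma kron3Coherence_eq_sqrt_sqrt_odd : kron3Coherence x y u =
    √√(normSq (kron3 x y u 7) * normSq (kron3 x y u 1) * normSq (kron3 x y u 2) *
      normSq (kron3 x y u 4)) := by
  rw [← Real.sqrt_sq (kron3Coherence_nonneg x y u), ← Real.sqrt_sq (sq_nonneg _)]
  congr 2
  simp only [kron3Coherence, kron3_eq_vec, Matrix.cons_val, mul_pow, Complex.sq_norm, normSq_mul,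
    normSq_conj]
  ring

end kron3Coherence

def antiDiag (ρ : Matrix (Fin 8) (Fin 8) ℂ) : Fin 4 → ℂ := ![ρ 0 7, ρ 1 6, ρ 2 5, ρ 3 4]

lemma antiDiag_sum {ι : Type*} (s : Finset ι) (M : ι → Matrix (Fin 8) (Fin 8) ℂ) :
    antiDiag (∑ k ∈ s, M k) = ∑ k ∈ s, antiDiag (M k) := by
  funext i
  fin_cases i <;> simp [antiDiag, Matrix.sum_apply]

lemma Lfun_sum {ι : Type*} (s : Finset ι) (c : ι → Fin 4 → ℂ) (z : Fin 4 → ℂ) :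
    Lfun (∑ k ∈ s, c k) z = ∑ k ∈ s, Lfun (c k) z := by
  simp only [Lfun, Finset.sum_apply, star_sum, Finset.mul_sum, ← Finset.sum_add_distrib, re_sum]

lemma Lfun_antiDiag_proj_kron3_le (x y u : Fin 2 → ℂ) (z : Fin 4 → ℂ) :
    Lfun (antiDiag (proj (kron3 x y u))) z ≤ Cfun z * kron3Coherence x y u := by
  convert re_le_Cfun_mul_norm z (x 0 * conj (x 1)) (y 0 * conj (y 1)) (u 0 * conj (u 1)) using 2
  · simp only [Lfun, antiDiag, proj, kron3_eq_vec, Matrix.of_apply, Matrix.cons_val, star_def,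
      map_mul, conj_conj]
    congr 1
    ring
  · rfl

lemma antiDiag_eq_of_Xpart_eq {ρ : Matrix (Fin 8) (Fin 8) ℂ} {a b : Fin 4 → ℝ} {c : Fin 4 → ℂ}
    (hX : Xpart ρ = XMat a b c) : antiDiag ρ = c := by
  have h : ∀ i j : Fin 8, i.val + j.val = 7 → ρ i j = XMat a b c i j := fun i j hij => by
    simpa [Xpart, hij] using congrFun (congrFun hX i) j
  funext i
  fin_cases i <;> exact h _ _ rfl

lemma re_diag_eq_of_Xpart_eq {ρ : Matrix (Fin 8) (Fin 8) ℂ} {a b : Fin 4 → ℝ} {c : Fin 4 → ℂ}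
    (hX : Xpart ρ = XMat a b c) :
    (fun i => (ρ i i).re) = ![a 0, a 1, a 2, a 3, b 3, b 2, b 1, b 0] := by
  have h : ∀ i, ρ i i = XMat a b c i i := fun i => by
    simpa [Xpart] using congrFun (congrFun hX i) i
  funext i
  fin_cases i <;> simp [h, XMat]

lemma re_sum_proj_apply_self {ι : Type*} (s : Finset ι) (v : ι → Fin 8 → ℂ) (i : Fin 8) :
    ((∑ k ∈ s, proj (v k)) i i).re = ∑ k ∈ s, normSq (v k i) := by
  simp [Matrix.sum_apply, proj, mul_conj]

lemma IsSep.exists_eq_sum_proj_kron3 {ρ : Matrix (Fin 8) (Fin 8) ℂ} (h : IsSep ρ) :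
    ∃ (n : ℕ) (x y u : Fin n → Fin 2 → ℂ), ρ = ∑ k, proj (kron3 (x k) (y k) (u k)) := by
  obtain ⟨n, p, x, y, u, hp, -, -, -, -, rfl⟩ := h
  refine ⟨n, fun k => (√(p k) : ℂ) • x k, y, u, Finset.sum_congr rfl fun k _ => ?_⟩
  have hsq : (√(p k) : ℂ) * √(p k) = p k := by rw [← ofReal_mul, Real.mul_self_sqrt (hp k)]
  ext i j
  simp only [Matrix.smul_apply, proj, kron3, Matrix.of_apply, Pi.smul_apply, smul_eq_mul, star_mul',
    star_def, conj_ofReal]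
  rw [← hsq]
  ring

/-- `Δ_ϱ` read off the diagonal `d = (a₁, a₂, a₃, a₄, b₄, b₃, b₂, b₁)` of `ϱ`. -/
def diagDelta (d : Fin 8 → ℝ) : ℝ :=
  min (min (min √(d 0 * d 7) √(d 1 * d 6)) (min √(d 2 * d 5) √(d 3 * d 4)))
    (min √√(d 0 * d 6 * d 5 * d 3) √√(d 7 * d 1 * d 2 * d 4))

lemma sum_kron3Coherence_le_diagDelta {ι : Type*} (s : Finset ι) (x y u : ι → Fin 2 → ℂ) :
    ∑ k ∈ s, kron3Coherence (x k) (y k) (u k) ≤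
      diagDelta fun i => ∑ k ∈ s, normSq (kron3 (x k) (y k) (u k) i) := by
  have hnn : ∀ i k, 0 ≤ normSq (kron3 (x k) (y k) (u k) i) := fun _ _ => normSq_nonneg _
  have pair : ∀ i j : Fin 8, i.val + j.val = 7 → ∑ k ∈ s, kron3Coherence (x k) (y k) (u k) ≤
      √((∑ k ∈ s, normSq (kron3 (x k) (y k) (u k) i)) *
        ∑ k ∈ s, normSq (kron3 (x k) (y k) (u k) j)) := fun i j hij => by
    simp only [kron3Coherence_eq_sqrt _ _ _ hij]
    exact sum_sqrt_mul_le_sqrt_mul_sum s (hnn i) (hnn j)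
  refine le_min (le_min (le_min (pair 0 7 rfl) (pair 1 6 rfl))
    (le_min (pair 2 5 rfl) (pair 3 4 rfl))) (le_min ?_ ?_)
  · simp only [kron3Coherence_eq_sqrt_sqrt_even]
    exact sum_sqrt_sqrt_mul_le_sqrt_sqrt_mul_sum s (hnn 0) (hnn 6) (hnn 5) (hnn 3)
  · simp only [kron3Coherence_eq_sqrt_sqrt_odd]
    exact sum_sqrt_sqrt_mul_le_sqrt_sqrt_mul_sum s (hnn 7) (hnn 1) (hnn 2) (hnn 4)

theorem stmt7_general (ρ : Matrix (Fin 8) (Fin 8) ℂ) (a b : Fin 4 → ℝ) (c : Fin 4 → ℂ)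
    (hsep : IsSep ρ) (hX : Xpart ρ = XMat a b c)
    (z : Fin 4 → ℂ) :
    Lfun c z ≤ Cfun z *
      min (min (min (Real.sqrt (a 0 * b 0)) (Real.sqrt (a 1 * b 1)))
               (min (Real.sqrt (a 2 * b 2)) (Real.sqrt (a 3 * b 3))))
          (min (Real.sqrt (Real.sqrt (a 0 * b 1 * b 2 * a 3)))
               (Real.sqrt (Real.sqrt (b 0 * a 1 * a 2 * b 3)))) := by
  obtain ⟨n, x, y, u, rfl⟩ := hsep.exists_eq_sum_proj_kron3
  have hdiag : (fun i => ∑ k, normSq (kron3 (x k) (y k) (u k) i)) =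
      ![a 0, a 1, a 2, a 3, b 3, b 2, b 1, b 0] :=
    (funext fun i => (re_sum_proj_apply_self _ _ i).symm).trans (re_diag_eq_of_Xpart_eq hX)
  calc Lfun c z = ∑ k, Lfun (antiDiag (proj (kron3 (x k) (y k) (u k)))) z := by
        rw [← antiDiag_eq_of_Xpart_eq hX, antiDiag_sum, Lfun_sum]
    _ ≤ ∑ k, Cfun z * kron3Coherence (x k) (y k) (u k) :=
        Finset.sum_le_sum fun k _ => Lfun_antiDiag_proj_kron3_le _ _ _ z
    _ = Cfun z * ∑ k, kron3Coherence (x k) (y k) (u k) := (Finset.mul_sum _ _ _).symm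
    _ ≤ Cfun z * diagDelta ![a 0, a 1, a 2, a 3, b 3, b 2, b 1, b 0] :=
        mul_le_mul_of_nonneg_left (hdiag ▸ sum_kron3Coherence_le_diagDelta _ x y u)
          (Cfun_nonneg z)

/-- Gühne's criterion: a separable state with X-part `X(a,b,c)`
satisfies `L(ϱ,z) ≤ C(z) Δ_ϱ` for every `z ∈ ℂ⁴`. -/
theorem stmt7 (ρ : Matrix (Fin 8) (Fin 8) ℂ) (a b : Fin 4 → ℝ) (c : Fin 4 → ℂ)
    (hstate : IsState ρ) (hsep : IsSep ρ) (hX : Xpart ρ = XMat a b c)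
    (z : Fin 4 → ℂ) :
    Lfun c z ≤ Cfun z *
      min (min (min (Real.sqrt (a 0 * b 0)) (Real.sqrt (a 1 * b 1)))
               (min (Real.sqrt (a 2 * b 2)) (Real.sqrt (a 3 * b 3))))
          (min (Real.sqrt (Real.sqrt (a 0 * b 1 * b 2 * a 3)))
               (Real.sqrt (Real.sqrt (b 0 * a 1 * a 2 * b 3)))) :=
  stmt7_general ρ a b c hsep hX z
end
end

section
/- Let z ∈ ℝ⁴ with z₁z₂z₃z₄ < 0 and suppose that for some i ∈ {1,2,3,4} one has 1/|z_i| ≥ Σ_{j≠i} 1/|z_j|. Then C(z) = |z₁| + |z₂| + |z₃| + |z₄| − 2|z_i|. -/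
open scoped ComplexOrder Matrix

noncomputable section

/-!
Writing `z j * cos θ j = |z j| * cos ψ j` (shift `θ j` by `0` or `π` according to the sign of
`z j`, and negate `ψ₁, ψ₂, ψ₃`), the constraint `θ₀ = α + β + γ` together with
`z₁z₂z₃z₄ < 0` becomes `cos (ψ₀ + ψ₁ + ψ₂ + ψ₃) = -1`. With `ψ j = 2 x j` we have
`∑ |z j| cos ψ j = ∑ |z j| - 2 ∑ |z j| sin² x j`, and `cos (∑ x j) = 0` forces
`sin² xᵢ = cos² (∑_{j ≠ i} x j)`. Since `|sin (∑_{j ≠ i} x j)| ≤ ∑_{j ≠ i} |sin x j|`,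
weighted Cauchy–Schwarz and `∑_{j ≠ i} 1/|z j| ≤ 1/|zᵢ|` give
`|zᵢ| sin² (∑_{j ≠ i} x j) ≤ ∑_{j ≠ i} |z j| sin² x j`, whence `∑ |z j| sin² x j ≥ |zᵢ|`.
The bound is attained by angles in `{0, π}` making every term `|z j|` except the `i`-th,
which is `-|zᵢ|`.
-/

open Real Finset

lemma abs_sin_sum_le {ι : Type*} (s : Finset ι) (x : ι → ℝ) :
    |sin (∑ j ∈ s, x j)| ≤ ∑ j ∈ s, |sin (x j)| := by
  induction s using Finset.cons_induction with
  | empty => simp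
  | cons a s ha ih =>
    rw [sum_cons, sum_cons, sin_add]
    calc |sin (x a) * cos (∑ j ∈ s, x j) + cos (x a) * sin (∑ j ∈ s, x j)|
        ≤ |sin (x a)| * |cos (∑ j ∈ s, x j)| + |cos (x a)| * |sin (∑ j ∈ s, x j)| := by
          rw [← abs_mul, ← abs_mul]; exact abs_add_le _ _
      _ ≤ |sin (x a)| * 1 + 1 * |sin (∑ j ∈ s, x j)| := by
          gcongr <;> exact abs_cos_le_one _
      _ ≤ |sin (x a)| + ∑ j ∈ s, |sin (x j)| := by linarith

lemma mul_sin_sum_sq_le {ι : Type*} (s : Finset ι) {a : ι → ℝ} (ha : ∀ j ∈ s, 0 < a j) {b : ℝ}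
    (hb : 0 < b) (hab : ∑ j ∈ s, (a j)⁻¹ ≤ b⁻¹) (x : ι → ℝ) :
    b * sin (∑ j ∈ s, x j) ^ 2 ≤ ∑ j ∈ s, a j * sin (x j) ^ 2 := by
  have hcs : (∑ j ∈ s, |sin (x j)|) ^ 2 ≤ (∑ j ∈ s, (a j)⁻¹) * ∑ j ∈ s, a j * sin (x j) ^ 2 :=
    sum_sq_le_sum_mul_sum_of_sq_le_mul s (fun j hj => (inv_pos.2 (ha j hj)).le)
      (fun j hj => by have := ha j hj; positivity)
      (fun j hj => by rw [sq_abs, ← mul_assoc, inv_mul_cancel₀ (ha j hj).ne', one_mul])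
  have hsum : 0 ≤ ∑ j ∈ s, a j * sin (x j) ^ 2 :=
    sum_nonneg fun j hj => by have := ha j hj; positivity
  calc b * sin (∑ j ∈ s, x j) ^ 2 ≤ b * (∑ j ∈ s, |sin (x j)|) ^ 2 := by
        rw [← sq_abs (sin _)]
        gcongr
        exact abs_sin_sum_le s x
    _ ≤ b * (b⁻¹ * ∑ j ∈ s, a j * sin (x j) ^ 2) := by gcongr; exact hcs.trans (by gcongr)
    _ = ∑ j ∈ s, a j * sin (x j) ^ 2 := by field_simp

lemma le_sum_mul_sin_sq {ι : Type*} [DecidableEq ι] {s : Finset ι} {a : ι → ℝ}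
    (ha : ∀ j ∈ s, 0 < a j) {i : ι} (hi : i ∈ s) (hdom : ∑ j ∈ s.erase i, (a j)⁻¹ ≤ (a i)⁻¹)
    {x : ι → ℝ} (hx : cos (∑ j ∈ s, x j) = 0) :
    a i ≤ ∑ j ∈ s, a j * sin (x j) ^ 2 := by
  rw [← add_sum_erase s _ hi] at hx ⊢
  have hrest := mul_sin_sum_sq_le (s.erase i) (fun j hj => ha j (mem_of_mem_erase hj))
    (ha i hi) hdom x
  set S := ∑ j ∈ s.erase i, x j
  have hsin : sin (x i) ^ 2 = cos S ^ 2 := by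
    rw [cos_add] at hx
    linear_combination -(sin (x i) * sin S + cos (x i) * cos S) * hx
      - sin (x i) ^ 2 * sin_sq_add_cos_sq S + cos S ^ 2 * sin_sq_add_cos_sq (x i)
  have hpyth : a i = a i * sin S ^ 2 + a i * cos S ^ 2 := by
    rw [← mul_add, sin_sq_add_cos_sq, mul_one]
  rw [hsin]
  linarith

lemma sum_mul_cos_le {ι : Type*} [DecidableEq ι] {s : Finset ι} {a : ι → ℝ}
    (ha : ∀ j ∈ s, 0 < a j) {i : ι} (hi : i ∈ s) (hdom : ∑ j ∈ s.erase i, (a j)⁻¹ ≤ (a i)⁻¹)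
    {ψ : ι → ℝ} (hψ : cos (∑ j ∈ s, ψ j) = -1) :
    ∑ j ∈ s, a j * cos (ψ j) ≤ ∑ j ∈ s, a j - 2 * a i := by
  have hhalf : cos (∑ j ∈ s, ψ j / 2) = 0 := by
    have h2 : cos (2 * ∑ j ∈ s, ψ j / 2) = -1 := by
      rwa [mul_sum, sum_congr rfl fun j _ => mul_div_cancel₀ (ψ j) two_ne_zero]
    rw [cos_two_mul] at h2
    exact pow_eq_zero_iff two_ne_zero |>.mp (by linarith)
  have hcos : ∀ j, cos (ψ j) = 1 - 2 * sin (ψ j / 2) ^ 2 := fun j => by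
    have h2 := cos_two_mul' (ψ j / 2)
    rw [mul_div_cancel₀ _ two_ne_zero] at h2
    rw [h2, cos_sq']
    ring
  calc ∑ j ∈ s, a j * cos (ψ j) = ∑ j ∈ s, a j - 2 * ∑ j ∈ s, a j * sin (ψ j / 2) ^ 2 := by
        simp only [hcos, mul_sum, ← sum_sub_distrib]
        exact sum_congr rfl fun j _ => by ring
    _ ≤ ∑ j ∈ s, a j - 2 * a i := by linarith [le_sum_mul_sin_sq ha hi hdom hhalf]

lemma exists_cos_eq_of_sq_eq_one {ε : ℝ} (hε : ε ^ 2 = 1) : ∃ θ, cos θ = ε ∧ sin θ = 0 :=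
  ⟨arccos ε, cos_arccos (by nlinarith) (by nlinarith), by rw [sin_arccos, hε, sub_self, sqrt_zero]⟩

lemma div_abs_sq_eq_one {x : ℝ} (hx : x ≠ 0) : (x / |x|) ^ 2 = 1 := by
  rw [div_pow, sq_abs, div_self (pow_ne_zero 2 hx)]

lemma mul_div_abs_self (x : ℝ) : x * (x / |x|) = |x| := by
  rw [mul_div_assoc', ← sq, ← sq_abs, sq, mul_self_div_self]

def trigForm (z : Fin 4 → ℝ) (α β γ : ℝ) : ℝ :=
  z 0 * cos (α + β + γ) + z 1 * cos α + z 2 * cos β + z 3 * cos γ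

lemma trigForm_neg (z : Fin 4 → ℝ) (α β γ : ℝ) : trigForm (-z) α β γ = -trigForm z α β γ := by
  simp only [trigForm, Pi.neg_apply]
  ring

section

variable {z : Fin 4 → ℝ} (h : z 0 * z 1 * z 2 * z 3 < 0)
include h

lemma ne_zero_of_prod_neg (j : Fin 4) : z j ≠ 0 := by
  intro hj
  fin_cases j <;> simp_all

lemma div_abs_prod_eq_neg_one :
    z 0 / |z 0| * (z 1 / |z 1|) * (z 2 / |z 2|) * (z 3 / |z 3|) = -1 := by
  have hz := ne_zero_of_prod_neg h
  calc _ = z 0 * z 1 * z 2 * z 3 / |z 0 * z 1 * z 2 * z 3| := by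
        simp only [abs_mul]
        field_simp
    _ = -1 := by rw [abs_of_neg h, div_neg, div_self h.ne]

lemma trigForm_le {i : Fin 4} (hi : ∑ j ∈ univ.erase i, (|z j|)⁻¹ ≤ (|z i|)⁻¹) (α β γ : ℝ) :
    trigForm z α β γ ≤ |z 0| + |z 1| + |z 2| + |z 3| - 2 * |z i| := by
  have hz := ne_zero_of_prod_neg h
  choose a hca hsa using fun j => exists_cos_eq_of_sq_eq_one (div_abs_sq_eq_one (hz j))
  have hterm : ∀ j θ, z j * cos θ = |z j| * cos (θ + a j) := fun j θ => by
    rw [cos_add, hca, hsa, mul_zero, sub_zero]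
    field_simp [hz j]
  have hψ : cos (∑ j, ![α + β + γ + a 0, -(α + a 1), -(β + a 2), -(γ + a 3)] j) = -1 := by
    rw [Fin.sum_univ_four]
    simp only [Matrix.cons_val]
    rw [show α + β + γ + a 0 + -(α + a 1) + -(β + a 2) + -(γ + a 3) = a 0 - a 1 - a 2 - a 3 by ring]
    simp only [cos_sub, sin_sub, hsa, hca, mul_zero, sub_zero, zero_mul]
    linear_combination div_abs_prod_eq_neg_one h
  have key := sum_mul_cos_le (fun j _ => abs_pos.2 (hz j)) (mem_univ i) hi hψ
  simp only [Fin.sum_univ_four, Matrix.cons_val, cos_neg] at key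
  simp only [trigForm, hterm]
  exact key

lemma exists_trigForm_eq (i : Fin 4) :
    ∃ α β γ, trigForm z α β γ = |z 0| + |z 1| + |z 2| + |z 3| - 2 * |z i| := by
  have hz := ne_zero_of_prod_neg h
  set σ : Fin 4 → ℝ := fun j => z j / |z j|
  set τ : Fin 4 → ℝ := fun j => if j = i then -1 else 1
  have hτ : ∀ j, (τ j * σ j) ^ 2 = 1 := fun j => by
    rw [mul_pow, div_abs_sq_eq_one (hz j), mul_one]
    simp only [τ]
    split_ifs <;> norm_num
  obtain ⟨α, hcα, hsα⟩ := exists_cos_eq_of_sq_eq_one (hτ 1)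
  obtain ⟨β, hcβ, hsβ⟩ := exists_cos_eq_of_sq_eq_one (hτ 2)
  obtain ⟨γ, hcγ, hsγ⟩ := exists_cos_eq_of_sq_eq_one (hτ 3)
  have hσ : σ 1 * σ 2 * σ 3 = -σ 0 := by
    linear_combination σ 0 * div_abs_prod_eq_neg_one h - σ 1 * σ 2 * σ 3 * div_abs_sq_eq_one (hz 0)
  refine ⟨α, β, γ, ?_⟩
  calc trigForm z α β γ
      = -(τ 1 * τ 2 * τ 3) * (z 0 * σ 0) + τ 1 * (z 1 * σ 1) + τ 2 * (z 2 * σ 2)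
          + τ 3 * (z 3 * σ 3) := by
        simp only [trigForm, cos_add, sin_add, hcα, hcβ, hcγ, hsα, hsβ, hsγ]
        linear_combination z 0 * τ 1 * τ 2 * τ 3 * hσ
    _ = -(τ 1 * τ 2 * τ 3) * |z 0| + τ 1 * |z 1| + τ 2 * |z 2| + τ 3 * |z 3| := by
        simp only [σ, mul_div_abs_self]
    _ = |z 0| + |z 1| + |z 2| + |z 3| - 2 * |z i| := by
        fin_cases i <;> simp [τ] <;> ring

lemma abs_trigForm_le {i : Fin 4} (hi : ∑ j ∈ univ.erase i, (|z j|)⁻¹ ≤ (|z i|)⁻¹)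
    (α β γ : ℝ) : |trigForm z α β γ| ≤ |z 0| + |z 1| + |z 2| + |z 3| - 2 * |z i| := by
  refine abs_le.2 ⟨?_, trigForm_le h hi α β γ⟩
  have hneg : (-z) 0 * (-z) 1 * (-z) 2 * (-z) 3 < 0 := by
    simpa only [Pi.neg_apply, neg_mul_neg, mul_neg, neg_mul, neg_neg] using h
  have := trigForm_le hneg (by simpa only [Pi.neg_apply, abs_neg] using hi) α β γ
  simp only [trigForm_neg, Pi.neg_apply, abs_neg] at this
  linarith

end

lemma Cfun_ofReal (z : Fin 4 → ℝ) :
    Cfun (fun j => (z j : ℂ)) = ⨆ p : ℝ × ℝ × ℝ, |trigForm z p.1 p.2.1 p.2.2| := by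
  simp only [Cfun, trigForm, Complex.re_ofReal_mul, Complex.exp_ofReal_mul_I_re]

/-- if `z₁z₂z₃z₄ < 0` and `1/|zᵢ| ≥ Σ_{j≠i} 1/|z_j|` for some `i`,
then `C(z) = |z₁| + |z₂| + |z₃| + |z₄| − 2|zᵢ|`. -/
theorem stmt11 (z : Fin 4 → ℝ) (h : z 0 * z 1 * z 2 * z 3 < 0) (i : Fin 4)
    (hi : ∑ j ∈ Finset.univ.erase i, (|z j|)⁻¹ ≤ (|z i|)⁻¹) :
    Cfun (fun j => (z j : ℂ)) = |z 0| + |z 1| + |z 2| + |z 3| - 2 * |z i| := by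
  have hbound := fun p : ℝ × ℝ × ℝ => abs_trigForm_le h hi p.1 p.2.1 p.2.2
  obtain ⟨α, β, γ, hattain⟩ := exists_trigForm_eq h i
  rw [Cfun_ofReal]
  exact le_antisymm (ciSup_le hbound) <|
    le_ciSup_of_le ⟨_, Set.forall_mem_range.2 hbound⟩ (α, β, γ) (hattain ▸ le_abs_self _)

end
end
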